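/- Let τ be a finite type over Ω, let f ∈ Ω_{τ→τ} and x ∈ Ω_τ be hereditarily positive. Then for all countable ordinals α and γ: Iter_α^τ (Iter_γ^τ f) x =hp Iter_{γ·α}^τ f x, where γ·α is ordinal multiplication. -/

import Mathlib

/-!  Framework: finite type structure over Ω = countable ordinals,
     limsup/liminf, transfinite iteration functionals, hereditarily
     positive and hereditarily monotone functionals. -/

noncomputable section
namespace IterOrd

open Ordinal

theorem omega1_pos : (0 : Ordinal) < ω₁ := Ordinal.omega0_pos.trans Ordinal.omega0_lt_omega_one

/-- `Om` is Ω, the set of countable ordinals (ordinals `< ω₁`). -/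
abbrev Om : Type 1 := {o : Ordinal // o < ω₁}

/-- Infimum of a subset of Ω (the minimum for nonempty sets; `0` for `∅`). -/
def infOm (s : Set Om) : Om :=
  ⟨sInf (Subtype.val '' s), by
    rcases (Subtype.val '' s).eq_empty_or_nonempty with h | h
    · rw [h]; simpa using omega1_pos
    · obtain ⟨x, _, he⟩ := csInf_mem h
      exact he ▸ x.2⟩

/-- Supremum of a subset of Ω.  Whenever the supremum of the set exists in Ω
(in particular for every countable subset, by regularity of `ω₁`) this is the
genuine supremum; otherwise it takes a junk value. -/
def supOm (s : Set Om) : Om :=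
  if h : sSup (Subtype.val '' s) < ω₁ then ⟨sSup (Subtype.val '' s), h⟩ else ⟨0, omega1_pos⟩

/-- Finite types over the base type `o` (interpreted as Ω). -/
inductive Ty : Type
  | base : Ty
  | arrow : Ty → Ty → Ty
deriving DecidableEq

/-- The full type structure over Ω: `El base = Ω` and
`El (arrow σ τ)` is the set of all functions `El σ → El τ`. -/
@[reducible] def El : Ty → Type 1
  | .base => Om
  | .arrow σ τ => El σ → El τ

/-- The order on each `El σ`: the ordinal order at base type, pointwise at arrow types. -/
def Le : (σ : Ty) → El σ → El σ → Prop
  | .base => fun x y => x ≤ y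
  | .arrow σ τ => fun f g => ∀ x : El σ, Le τ (f x) (g x)

/-- Suprema, computed pointwise at function types. -/
def supEl : (σ : Ty) → Set (El σ) → El σ
  | .base => supOm
  | .arrow σ τ => fun S (x : El σ) => supEl τ ((fun f : El (.arrow σ τ) => f x) '' S)

/-- Infima, computed pointwise at function types. -/
def infEl : (σ : Ty) → Set (El σ) → El σ
  | .base => infOm
  | .arrow σ τ => fun S (x : El σ) => infEl τ ((fun f : El (.arrow σ τ) => f x) '' S)

/-- `limsup_{ξ→ζ} f ξ = inf_{γ<ζ} sup_{γ≤ξ<ζ} f ξ`. -/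
def limsupEl (σ : Ty) (ζ : Ordinal) (f : ∀ ξ : Ordinal, ξ < ζ → El σ) : El σ :=
  infEl σ {y | ∃ γ, ∃ _ : γ < ζ, y = supEl σ {z | ∃ ξ, ∃ h : ξ < ζ, γ ≤ ξ ∧ z = f ξ h}}

/-- `liminf_{ξ→ζ} f ξ = sup_{γ<ζ} inf_{γ≤ξ<ζ} f ξ`. -/
def liminfEl (σ : Ty) (ζ : Ordinal) (f : ∀ ξ : Ordinal, ξ < ζ → El σ) : El σ :=
  supEl σ {y | ∃ γ, ∃ _ : γ < ζ, y = infEl σ {z | ∃ ξ, ∃ h : ξ < ζ, γ ≤ ξ ∧ z = f ξ h}}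

/-- `limsup` of a ζ-indexed sequence of ordinals. -/
def oLimsup (ζ : Ordinal) (a : Ordinal → Ordinal) : Ordinal :=
  sInf {s | ∃ γ, γ < ζ ∧ s = sSup (a '' {ξ | γ ≤ ξ ∧ ξ < ζ})}

/-- `liminf` of a ζ-indexed sequence of ordinals. -/
def oLiminf (ζ : Ordinal) (a : Ordinal → Ordinal) : Ordinal :=
  sSup {s | ∃ γ, γ < ζ ∧ s = sInf (a '' {ξ | γ ≤ ξ ∧ ξ < ζ})}

/-- The α-iteration functional of type σ:
`Iter 0 f x = x`, `Iter (α+1) f x = f (Iter α f x)`, and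
`Iter μ f x = limsup_{ξ→μ} Iter ξ f x` for limit μ. -/
def Iter (σ : Ty) (α : Ordinal) : (El σ → El σ) → El σ → El σ :=
  Ordinal.limitRecOn (motive := fun _ => (El σ → El σ) → El σ → El σ) α
    (fun _ x => x)
    (fun _ ih f x => f (ih f x))
    (fun μ _ ih f x => limsupEl σ μ (fun ξ h => ih ξ h f x))

/-- The pair (hereditarily positive, ≤hp), defined simultaneously by recursion on the type.
Every element of `Ω` and of `Ω_{ρ→τ}` with `ρ ≠ τ` is h.p., and `≤hp` there is `≤`;
`f : Ω_{τ→τ}` is h.p. iff it preserves h.p., is inflationary on h.p. arguments and is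
monotone (w.r.t. `≤hp`) on h.p. arguments; `f ≤hp f'` on `Ω_{τ→τ}` iff `f x ≤hp f' x`
for every h.p. `x`. -/
def HPaux : (σ : Ty) → (El σ → Prop) × (El σ → El σ → Prop)
  | .base => ⟨fun _ => True, fun x y => x ≤ y⟩
  | .arrow ρ τ =>
      ⟨fun f =>
        if h : ρ = τ then
          (∀ x, (HPaux ρ).1 x → (HPaux τ).1 (f x)) ∧
          (∀ x, (HPaux ρ).1 x → (HPaux τ).2 (cast (congrArg El h) x) (f x)) ∧
          (∀ x y, (HPaux ρ).1 x → (HPaux ρ).1 y → (HPaux ρ).2 x y → (HPaux τ).2 (f x) (f y))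
        else True,
       fun f g =>
        if ρ = τ then ∀ x, (HPaux ρ).1 x → (HPaux τ).2 (f x) (g x)
        else Le (.arrow ρ τ) f g⟩

/-- Hereditarily positive functionals. -/
def Hp (σ : Ty) : El σ → Prop := (HPaux σ).1

/-- The order `≤hp`. -/
def HpLe (σ : Ty) : El σ → El σ → Prop := (HPaux σ).2

/-- `f =hp g` iff `f ≤hp g` and `g ≤hp f`. -/
def HpEq (σ : Ty) (f g : El σ) : Prop := HpLe σ f g ∧ HpLe σ g f

/-- The pair (hereditarily monotone, ≤ on the hereditarily monotone structure),
by recursion on the type.  `f` is hereditarily monotone iff it maps hereditarily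
monotone arguments to hereditarily monotone values, monotonically; the order is
pointwise over hereditarily monotone arguments (i.e. the order of `Ω^mon`). -/
def HMaux : (σ : Ty) → (El σ → Prop) × (El σ → El σ → Prop)
  | .base => ⟨fun _ => True, fun x y => x ≤ y⟩
  | .arrow σ τ =>
      ⟨fun f =>
        (∀ x, (HMaux σ).1 x → (HMaux τ).1 (f x)) ∧
        (∀ x y, (HMaux σ).1 x → (HMaux σ).1 y → (HMaux σ).2 x y → (HMaux τ).2 (f x) (f y)),
       fun f g => ∀ x, (HMaux σ).1 x → (HMaux τ).2 (f x) (g x)⟩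

/-- Hereditarily monotone functionals: the members of the type structure `Ω^mon`. -/
def HM (σ : Ty) : El σ → Prop := (HMaux σ).1

/-- The (pointwise) order of the hereditarily monotone type structure `Ω^mon`. -/
def LeHM (σ : Ty) : El σ → El σ → Prop := (HMaux σ).2

/-- Equality in the hereditarily monotone type structure `Ω^mon`. -/
def EqHM (σ : Ty) (f g : El σ) : Prop := LeHM σ f g ∧ LeHM σ g f

/-!
For h.p. `f` and `x` the iterates `ξ ↦ Iter_ξ f x` form a `≤hp`-increasing chain, and at a
countable limit the limsup of an increasing chain is its `≤hp`-least upper bound (the tails have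
countable, hence genuine, suprema in `Ω`). So two limit stages are `=hp` as soon as their chains
are mutually cofinal. This gives `Iter_{β+γ} f x =hp Iter_γ f (Iter_β f x)`, and then the theorem
by induction on `α`: the successor step is this law with `β = γ·α`, and at a limit `μ` the chains
`Iter_η (Iter_γ f) x` (`η < μ`) and `Iter_ξ f x` (`ξ < γ·μ`) are cofinal because every `ξ < γ·μ`
is below some `γ·η`. For `γ = 0` both sides are `=hp x`, since `Iter_0 f` is the identity.
-/

section Om

open Cardinal in
theorem countable_Iio_of_lt_omega1 {ζ : Ordinal} (hζ : ζ < ω₁) : (Set.Iio ζ).Countable := by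
  rw [← le_aleph0_iff_set_countable, Cardinal.mk_Iio_ordinal, lift_le_aleph0,
    ← Order.lt_succ_iff, succ_aleph0, ← lt_ord, ord_aleph]
  exact hζ

theorem add_lt_omega1 {a b : Ordinal} (ha : a < ω₁) (hb : b < ω₁) : a + b < ω₁ :=
  isPrincipal_add_omega 1 ha hb

theorem mul_lt_omega1 {a b : Ordinal} (ha : a < ω₁) (hb : b < ω₁) : a * b < ω₁ :=
  isPrincipal_mul_omega 1 ha hb

theorem sSup_val_lt_omega1 {s : Set Om} (hs : s.Countable) : sSup (Subtype.val '' s) < ω₁ := by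
  have := hs.to_subtype
  rw [sSup_image']
  exact Ordinal.iSup_lt_omega_one fun x => x.1.2

theorem le_supOm {s : Set Om} (hs : s.Countable) {x : Om} (hx : x ∈ s) : x ≤ supOm s := by
  rw [supOm, dif_pos (sSup_val_lt_omega1 hs)]
  exact le_csSup ⟨ω₁, by rintro _ ⟨y, -, rfl⟩; exact y.2.le⟩ (Set.mem_image_of_mem _ hx)

theorem supOm_le {s : Set Om} (hs : s.Nonempty) {c : Om} (hc : ∀ x ∈ s, x ≤ c) :
    supOm s ≤ c := by
  rw [supOm]
  split
  · show sSup _ ≤ c.val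
    exact csSup_le (hs.image _) (by rintro _ ⟨y, hy, rfl⟩; exact hc y hy)
  · exact (zero_le : (0 : Ordinal) ≤ c.val)

theorem infOm_le {s : Set Om} {x : Om} (hx : x ∈ s) : infOm s ≤ x :=
  show sInf _ ≤ x.val from csInf_le (OrderBot.bddBelow _) (Set.mem_image_of_mem _ hx)

theorem infOm_mem {s : Set Om} (hs : s.Nonempty) : infOm s ∈ s := by
  obtain ⟨x, hx, he⟩ := csInf_mem (hs.image Subtype.val)
  rwa [show infOm s = x from Subtype.ext he.symm]

end Om

section Order

theorem Le.refl : ∀ {σ : Ty} (x : El σ), Le σ x x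
  | .base, _ => le_rfl
  | .arrow _ _, f => fun y => Le.refl (f y)

theorem Le.trans : ∀ {σ : Ty} {x y z : El σ}, Le σ x y → Le σ y z → Le σ x z
  | .base, _, _, _, h₁, h₂ => le_trans h₁ h₂
  | .arrow _ _, _, _, _, h₁, h₂ => fun u => (h₁ u).trans (h₂ u)

theorem hp_arrow_of_ne {σ τ : Ty} (h : σ ≠ τ) (f : El (.arrow σ τ)) :
    Hp (.arrow σ τ) f := by
  simp only [Hp, HPaux, dif_neg h]

theorem hp_arrow_iff {τ : Ty} {f : El (.arrow τ τ)} :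
    Hp (.arrow τ τ) f ↔
      (∀ x, Hp τ x → Hp τ (f x)) ∧ (∀ x, Hp τ x → HpLe τ x (f x)) ∧
      (∀ x y, Hp τ x → Hp τ y → HpLe τ x y → HpLe τ (f x) (f y)) := by
  simp only [Hp, HpLe, HPaux, dif_pos, cast_eq]

theorem hpLe_arrow_iff {τ : Ty} {f g : El (.arrow τ τ)} :
    HpLe (.arrow τ τ) f g ↔ ∀ x, Hp τ x → HpLe τ (f x) (g x) := by
  simp only [Hp, HpLe, HPaux, if_true]

theorem hpLe_arrow_iff_le {σ τ : Ty} (h : σ ≠ τ) {f g : El (.arrow σ τ)} :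
    HpLe (.arrow σ τ) f g ↔ Le (.arrow σ τ) f g := by
  simp only [HpLe, HPaux, if_neg h]

section Hp

variable {τ : Ty} {f g : El (.arrow τ τ)} {x y : El τ}

theorem Hp.map (hf : Hp (.arrow τ τ) f) (hx : Hp τ x) : Hp τ (f x) :=
  (hp_arrow_iff.1 hf).1 x hx

theorem Hp.le_map (hf : Hp (.arrow τ τ) f) (hx : Hp τ x) : HpLe τ x (f x) :=
  (hp_arrow_iff.1 hf).2.1 x hx

theorem Hp.map_le_map (hf : Hp (.arrow τ τ) f) (hx : Hp τ x) (hy : Hp τ y) (hxy : HpLe τ x y) :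
    HpLe τ (f x) (f y) :=
  (hp_arrow_iff.1 hf).2.2 x y hx hy hxy

theorem HpLe.apply (h : HpLe (.arrow τ τ) f g) (hx : Hp τ x) : HpLe τ (f x) (g x) :=
  hpLe_arrow_iff.1 h x hx

end Hp

theorem HpLe.refl : ∀ {σ : Ty} (x : El σ), HpLe σ x x
  | .base, _ => le_rfl
  | .arrow σ τ, f => by
    by_cases h : σ = τ
    · subst h
      exact hpLe_arrow_iff.2 fun y _ => HpLe.refl (f y)
    · exact (hpLe_arrow_iff_le h).2 (Le.refl f)

theorem HpLe.trans : ∀ {σ : Ty} {x y z : El σ}, HpLe σ x y → HpLe σ y z → HpLe σ x z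
  | .base, _, _, _, h₁, h₂ => le_trans h₁ h₂
  | .arrow σ τ, _, _, _, h₁, h₂ => by
    by_cases h : σ = τ
    · subst h
      exact hpLe_arrow_iff.2 fun y hy => (h₁.apply hy).trans (h₂.apply hy)
    · rw [hpLe_arrow_iff_le h] at *
      exact h₁.trans h₂

theorem HpEq.refl {σ : Ty} (x : El σ) : HpEq σ x x := ⟨HpLe.refl x, HpLe.refl x⟩

theorem HpEq.symm {σ : Ty} {x y : El σ} (h : HpEq σ x y) : HpEq σ y x := ⟨h.2, h.1⟩

theorem HpEq.trans {σ : Ty} {x y z : El σ} (h₁ : HpEq σ x y) (h₂ : HpEq σ y z) :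
    HpEq σ x z :=
  ⟨h₁.1.trans h₂.1, h₂.2.trans h₁.2⟩

theorem Hp.map_hpEq_map {τ : Ty} {f : El (.arrow τ τ)} {x y : El τ} (hf : Hp (.arrow τ τ) f)
    (hx : Hp τ x) (hy : Hp τ y) (h : HpEq τ x y) : HpEq τ (f x) (f y) :=
  ⟨hf.map_le_map hx hy h.1, hf.map_le_map hy hx h.2⟩

end Order

def MonotoneBelow {α : Type*} (r : α → α → Prop) (ζ : Ordinal) (b : Ordinal → α) :
    Prop :=
  ∀ ⦃ξ ξ'⦄, ξ ≤ ξ' → ξ' < ζ → r (b ξ) (b ξ')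

theorem MonotoneBelow.mono {α : Type*} {r : α → α → Prop} {ζ ζ' : Ordinal}
    {b : Ordinal → α} (hb : MonotoneBelow r ζ' b) (hζ : ζ ≤ ζ') : MonotoneBelow r ζ b :=
  fun _ _ hle h => hb hle (h.trans_le hζ)

section Limsup

variable {ζ : Ordinal}

theorem le_limsupEl_base (hζ : ζ < ω₁) {b : Ordinal → Om}
    (hb : MonotoneBelow (· ≤ ·) ζ b) {ξ : Ordinal} (hξ : ξ < ζ) :
    b ξ ≤ limsupEl .base ζ fun ξ _ => b ξ := by
  -- the infimum over the tails is attained at some tail `γ`, which contains `b (max γ ξ)`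
  obtain ⟨γ, hγ, hinf⟩ := infOm_mem (s := {y | ∃ γ, ∃ _ : γ < ζ,
    y = supOm {z | ∃ ξ, ∃ _ : ξ < ζ, γ ≤ ξ ∧ z = b ξ}}) ⟨_, ξ, hξ, rfl⟩
  have hcount : {z | ∃ ξ, ∃ _ : ξ < ζ, γ ≤ ξ ∧ z = b ξ}.Countable :=
    ((countable_Iio_of_lt_omega1 hζ).image b).mono
      (by rintro _ ⟨ξ', h', -, rfl⟩; exact ⟨ξ', h', rfl⟩)
  calc b ξ ≤ b (max γ ξ) := hb (le_max_right _ _) (max_lt hγ hξ)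
    _ ≤ _ := le_supOm hcount ⟨max γ ξ, max_lt hγ hξ, le_max_left _ _, rfl⟩
    _ = limsupEl .base ζ fun ξ _ => b ξ := hinf.symm

theorem limsupEl_base_le (hζ : 0 < ζ) {b : Ordinal → Om} {c : Om}
    (hc : ∀ ξ < ζ, b ξ ≤ c) :
    limsupEl .base ζ (fun ξ _ => b ξ) ≤ c :=
  (infOm_le (s := {y | ∃ γ, ∃ _ : γ < ζ,
      y = supOm {z | ∃ ξ, ∃ _ : ξ < ζ, γ ≤ ξ ∧ z = b ξ}}) ⟨0, hζ, rfl⟩).trans <|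
    supOm_le (s := {z | ∃ ξ, ∃ _ : ξ < ζ, 0 ≤ ξ ∧ z = b ξ})
      ⟨b 0, 0, hζ, le_rfl, rfl⟩ fun _ ⟨ξ, hξ, _, hz⟩ => hz ▸ hc ξ hξ

theorem limsupEl_arrow_apply {σ τ : Ty} (b : Ordinal → El (.arrow σ τ)) (y : El σ) :
    limsupEl (.arrow σ τ) ζ (fun ξ _ => b ξ) y = limsupEl τ ζ fun ξ _ => b ξ y := by
  have hsup : ∀ γ, supEl (.arrow σ τ) {z | ∃ ξ, ∃ _ : ξ < ζ, γ ≤ ξ ∧ z = b ξ} y =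
      supEl τ {z | ∃ ξ, ∃ _ : ξ < ζ, γ ≤ ξ ∧ z = b ξ y} := by
    refine fun γ => congrArg (supEl τ) (Set.ext fun _ => ⟨?_, ?_⟩)
    · rintro ⟨_, ⟨ξ, hξ, hγ, rfl⟩, rfl⟩
      exact ⟨ξ, hξ, hγ, rfl⟩
    · rintro ⟨ξ, hξ, hγ, rfl⟩
      exact ⟨_, ⟨ξ, hξ, hγ, rfl⟩, rfl⟩
  refine congrArg (infEl τ) (Set.ext fun _ => ⟨?_, ?_⟩)
  · rintro ⟨_, ⟨γ, hγ, rfl⟩, rfl⟩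
    exact ⟨γ, hγ, hsup γ⟩
  · rintro ⟨γ, hγ, rfl⟩
    exact ⟨_, ⟨γ, hγ, rfl⟩, hsup γ⟩

theorem MonotoneBelow.hpLe_apply {τ : Ty} {b : Ordinal → El (.arrow τ τ)}
    (hb : MonotoneBelow (HpLe (.arrow τ τ)) ζ b) {y : El τ} (hy : Hp τ y) :
    MonotoneBelow (HpLe τ) ζ fun ξ => b ξ y :=
  fun _ _ hle h => (hb hle h).apply hy

theorem le_limsupEl {τ : Ty} (hζ : ζ < ω₁) {b : Ordinal → El τ}
    (hb : MonotoneBelow (Le τ) ζ b) {ξ : Ordinal} (hξ : ξ < ζ) :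
    Le τ (b ξ) (limsupEl τ ζ fun ξ _ => b ξ) := by
  induction τ with
  | base => exact le_limsupEl_base hζ hb hξ
  | arrow σ τ _ ih =>
    intro y
    rw [limsupEl_arrow_apply]
    exact ih (fun _ _ hle h => hb hle h y)

theorem limsupEl_le {τ : Ty} (hζ : 0 < ζ) {b : Ordinal → El τ} {c : El τ}
    (hc : ∀ ξ < ζ, Le τ (b ξ) c) : Le τ (limsupEl τ ζ fun ξ _ => b ξ) c := by
  induction τ with
  | base => exact limsupEl_base_le hζ hc
  | arrow σ τ _ ih =>
    intro y
    rw [limsupEl_arrow_apply]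
    exact ih fun ξ hξ => hc ξ hξ y

theorem hpLe_limsupEl {τ : Ty} (hζ : ζ < ω₁) {b : Ordinal → El τ}
    (hb : MonotoneBelow (HpLe τ) ζ b) {ξ : Ordinal} (hξ : ξ < ζ) :
    HpLe τ (b ξ) (limsupEl τ ζ fun ξ _ => b ξ) := by
  induction τ with
  | base => exact le_limsupEl_base hζ hb hξ
  | arrow σ τ _ ih =>
    by_cases h : σ = τ
    · subst h
      refine hpLe_arrow_iff.2 fun y hy => ?_
      rw [limsupEl_arrow_apply]
      exact ih (hb.hpLe_apply hy)
    · rw [hpLe_arrow_iff_le h]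
      exact le_limsupEl hζ (fun _ _ hle h' => (hpLe_arrow_iff_le h).1 (hb hle h')) hξ

theorem limsupEl_hpLe {τ : Ty} (hζ : 0 < ζ) {b : Ordinal → El τ} {c : El τ}
    (hc : ∀ ξ < ζ, HpLe τ (b ξ) c) : HpLe τ (limsupEl τ ζ fun ξ _ => b ξ) c := by
  induction τ with
  | base => exact limsupEl_base_le hζ hc
  | arrow σ τ _ ih =>
    by_cases h : σ = τ
    · subst h
      refine hpLe_arrow_iff.2 fun y hy => ?_
      rw [limsupEl_arrow_apply]
      exact ih fun ξ hξ => (hc ξ hξ).apply hy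
    · rw [hpLe_arrow_iff_le h]
      exact limsupEl_le hζ fun ξ hξ => (hpLe_arrow_iff_le h).1 (hc ξ hξ)

theorem limsupEl_hpLe_limsupEl {τ : Ty} {ζ' : Ordinal} (hζ : 0 < ζ) (hζ' : ζ' < ω₁)
    {b c : Ordinal → El τ} (hc : MonotoneBelow (HpLe τ) ζ' c)
    (hbc : ∀ ξ < ζ, ∃ η < ζ', HpLe τ (b ξ) (c η)) :
    HpLe τ (limsupEl τ ζ fun ξ _ => b ξ) (limsupEl τ ζ' fun η _ => c η) :=
  limsupEl_hpLe hζ fun ξ hξ =>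
    let ⟨_, hη, hle⟩ := hbc ξ hξ
    hle.trans (hpLe_limsupEl hζ' hc hη)

theorem hp_limsupEl {τ : Ty} (hζ₀ : 0 < ζ) (hζ : ζ < ω₁) {b : Ordinal → El τ}
    (hp : ∀ ξ < ζ, Hp τ (b ξ)) (hb : MonotoneBelow (HpLe τ) ζ b) :
    Hp τ (limsupEl τ ζ fun ξ _ => b ξ) := by
  induction τ with
  | base => trivial
  | arrow σ τ _ ih =>
    by_cases h : σ = τ
    · subst h
      refine hp_arrow_iff.2 ⟨fun y hy => ?_, fun y hy => ?_, fun y y' hy hy' hyy' => ?_⟩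
      · rw [limsupEl_arrow_apply]
        exact ih (fun ξ hξ => (hp ξ hξ).map hy) (hb.hpLe_apply hy)
      · rw [limsupEl_arrow_apply]
        exact ((hp 0 hζ₀).le_map hy).trans (hpLe_limsupEl hζ (hb.hpLe_apply hy) hζ₀)
      · rw [limsupEl_arrow_apply, limsupEl_arrow_apply]
        exact limsupEl_hpLe_limsupEl hζ₀ hζ (hb.hpLe_apply hy') fun ξ hξ =>
          ⟨ξ, hξ, (hp ξ hξ).map_le_map hy hy' hyy'⟩
    · exact hp_arrow_of_ne h _

end Limsup

section Iter

variable {τ : Ty}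

theorem iter_zero (f : El τ → El τ) (x : El τ) : Iter τ 0 f x = x := by
  rw [Iter, Ordinal.limitRecOn_zero]

theorem iter_add_one (α : Ordinal) (f : El τ → El τ) (x : El τ) :
    Iter τ (α + 1) f x = f (Iter τ α f x) := by
  rw [Iter, Ordinal.limitRecOn_add_one]
  rfl

theorem iter_of_isSuccLimit {μ : Ordinal} (hμ : Order.IsSuccLimit μ) (f : El τ → El τ)
    (x : El τ) : Iter τ μ f x = limsupEl τ μ fun ξ _ => Iter τ ξ f x := by
  rw [Iter, Ordinal.limitRecOn_limit _ _ _ _ hμ]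
  rfl

theorem iter_zero_eq_id (f : El τ → El τ) : Iter τ 0 f = id :=
  funext (iter_zero f)

theorem hp_id : Hp (.arrow τ τ) id :=
  hp_arrow_iff.2 ⟨fun _ hx => hx, fun x _ => HpLe.refl x, fun _ _ _ _ hxy => hxy⟩

theorem Hp.comp {f g : El (.arrow τ τ)} (hf : Hp (.arrow τ τ) f) (hg : Hp (.arrow τ τ) g) :
    Hp (.arrow τ τ) (f ∘ g) :=
  hp_arrow_iff.2 ⟨fun _ hx => hf.map (hg.map hx), fun _ hx => (hg.le_map hx).trans
    (hf.le_map (hg.map hx)), fun _ _ hx hy hxy => hf.map_le_map (hg.map hx) (hg.map hy)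
    (hg.map_le_map hx hy hxy)⟩

variable {f : El (.arrow τ τ)}

theorem hp_iter_and_hpLe_iter (hf : Hp (.arrow τ τ) f) {α : Ordinal} (hα : α < ω₁) :
    Hp (.arrow τ τ) (Iter τ α f) ∧
      ∀ β ≤ α, HpLe (.arrow τ τ) (Iter τ β f) (Iter τ α f) := by
  induction α using Ordinal.limitRecOn with
  | zero =>
    rw [iter_zero_eq_id]
    refine ⟨hp_id, fun β hβ => ?_⟩
    rw [nonpos_iff_eq_zero.1 hβ, iter_zero_eq_id]
    exact HpLe.refl _
  | add_one α ih =>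
    obtain ⟨hp, hle⟩ := ih ((lt_add_one α).trans hα)
    have hsucc : Iter τ (α + 1) f = f ∘ Iter τ α f := funext (iter_add_one α f)
    refine ⟨hsucc ▸ hf.comp hp, fun β hβ => ?_⟩
    rcases hβ.lt_or_eq with hβ | rfl
    · rw [hsucc]
      exact hpLe_arrow_iff.2 fun x hx =>
        ((hle β (Order.lt_add_one_iff.1 hβ)).apply hx).trans (hf.le_map (hp.map hx))
    · exact HpLe.refl _
  | limit μ hμ ih =>
    have hmono : MonotoneBelow (HpLe (.arrow τ τ)) μ fun ξ => Iter τ ξ f :=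
      fun ξ _ hle h => (ih _ h (h.trans hα)).2 ξ hle
    have hlim : Iter τ μ f = limsupEl (.arrow τ τ) μ fun ξ _ => Iter τ ξ f :=
      funext fun x => by rw [iter_of_isSuccLimit hμ, limsupEl_arrow_apply]
    refine ⟨hlim ▸ hp_limsupEl hμ.pos hα (fun ξ hξ => (ih ξ hξ (hξ.trans hα)).1) hmono,
      fun β hβ => ?_⟩
    rcases hβ.lt_or_eq with hβ | rfl
    · exact hlim ▸ hpLe_limsupEl hα hmono hβ
    · exact HpLe.refl _

theorem hp_iter (hf : Hp (.arrow τ τ) f) {α : Ordinal} (hα : α < ω₁) :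
    Hp (.arrow τ τ) (Iter τ α f) :=
  (hp_iter_and_hpLe_iter hf hα).1

theorem monotoneBelow_iter (hf : Hp (.arrow τ τ) f) {x : El τ} (hx : Hp τ x) :
    MonotoneBelow (HpLe τ) ω₁ fun ξ => Iter τ ξ f x :=
  fun ξ _ hle h => ((hp_iter_and_hpLe_iter hf h).2 ξ hle).apply hx

theorem iter_add_hpEq (hf : Hp (.arrow τ τ) f) {x : El τ} (hx : Hp τ x) {β γ : Ordinal}
    (hβ : β < ω₁) (hγ : γ < ω₁) :
    HpEq τ (Iter τ (β + γ) f x) (Iter τ γ f (Iter τ β f x)) := by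
  have hxβ : Hp τ (Iter τ β f x) := (hp_iter hf hβ).map hx
  induction γ using Ordinal.limitRecOn with
  | zero => rw [add_zero, iter_zero]; exact HpEq.refl _
  | add_one γ ih =>
    have hγ' : γ < ω₁ := (lt_add_one γ).trans hγ
    rw [← add_assoc, iter_add_one, iter_add_one]
    exact hf.map_hpEq_map ((hp_iter hf (add_lt_omega1 hβ hγ')).map hx)
      ((hp_iter hf hγ').map hxβ) (ih hγ')
  | limit μ hμ ih =>
    have hβμ : Order.IsSuccLimit (β + μ) := isSuccLimit_add β hμ
    rw [iter_of_isSuccLimit hβμ, iter_of_isSuccLimit hμ]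
    constructor
    · refine limsupEl_hpLe_limsupEl hβμ.pos hγ ((monotoneBelow_iter hf hxβ).mono hγ.le)
        fun ξ hξ => ?_
      rcases le_or_gt β ξ with hβξ | hξβ
      · obtain ⟨η, rfl⟩ : ∃ η, ξ = β + η :=
          ⟨ξ - β, (Ordinal.add_sub_cancel_of_le hβξ).symm⟩
        have hη : η < μ := (add_lt_add_iff_left β).1 hξ
        exact ⟨η, hη, (ih η hη (hη.trans hγ)).1⟩
      · refine ⟨0, hμ.pos, ?_⟩
        rw [iter_zero]
        exact monotoneBelow_iter hf hx hξβ.le hβ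
    · have hβγ := add_lt_omega1 hβ hγ
      refine limsupEl_hpLe_limsupEl hμ.pos hβγ ((monotoneBelow_iter hf hx).mono hβγ.le)
        fun η hη => ?_
      exact ⟨β + η, add_lt_add_right hη β, (ih η hη (hη.trans hγ)).2⟩

theorem iter_id_hpEq {x : El τ} (hx : Hp τ x) {α : Ordinal} (hα : α < ω₁) :
    HpEq τ (Iter τ α id x) x := by
  induction α using Ordinal.limitRecOn with
  | zero => rw [iter_zero]; exact HpEq.refl x
  | add_one α ih => rw [iter_add_one]; exact ih ((lt_add_one α).trans hα)
  | limit μ hμ ih =>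
    rw [iter_of_isSuccLimit hμ]
    refine ⟨limsupEl_hpLe hμ.pos fun ξ hξ => (ih ξ hξ (hξ.trans hα)).1, ?_⟩
    simpa only [iter_zero] using
      hpLe_limsupEl hα ((monotoneBelow_iter hp_id hx).mono hα.le) hμ.pos

end Iter

/-- For h.p. `f ∈ Ω_{τ→τ}` and h.p. `x ∈ Ω_τ`, and countable ordinals
`α`, `γ`: `Iter_α^τ (Iter_γ^τ f) x =hp Iter_{γ·α}^τ f x`. -/
theorem iter_iter_hpEq_iter_mul (τ : Ty) (f : El (.arrow τ τ)) (hf : Hp (.arrow τ τ) f)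
    (x : El τ) (hx : Hp τ x) (α γ : Ordinal) (hα : α < ω₁) (hγ : γ < ω₁) :
    HpEq τ (Iter τ α (Iter τ γ f) x) (Iter τ (γ * α) f x) := by
  rcases eq_or_ne γ 0 with rfl | hγ₀
  · rw [zero_mul, iter_zero, iter_zero_eq_id]
    exact iter_id_hpEq hx hα
  have hg := hp_iter hf hγ
  induction α using Ordinal.limitRecOn with
  | zero => rw [mul_zero, iter_zero, iter_zero]; exact HpEq.refl x
  | add_one α ih =>
    have hα' : α < ω₁ := (lt_add_one α).trans hα
    have hγα : γ * α < ω₁ := mul_lt_omega1 hγ hα'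
    rw [iter_add_one, mul_add_one]
    exact (hg.map_hpEq_map ((hp_iter hg hα').map hx) ((hp_iter hf hγα).map hx) (ih hα')).trans
      (iter_add_hpEq hf hx hγα hγ).symm
  | limit μ hμ ih =>
    have hγpos : 0 < γ := pos_iff_ne_zero.2 hγ₀
    have hγμ : Order.IsSuccLimit (γ * μ) := isSuccLimit_mul_right hγpos hμ
    have hγμ' : γ * μ < ω₁ := mul_lt_omega1 hγ hα
    rw [iter_of_isSuccLimit hμ, iter_of_isSuccLimit hγμ]
    constructor
    · refine limsupEl_hpLe_limsupEl hμ.pos hγμ' ((monotoneBelow_iter hf hx).mono hγμ'.le)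
        fun η hη => ?_
      exact ⟨γ * η, mul_lt_mul_of_pos_left hη hγpos, (ih η hη (hη.trans hα)).1⟩
    · refine limsupEl_hpLe_limsupEl hγμ.pos hα ((monotoneBelow_iter hg hx).mono hα.le)
        fun ξ hξ => ?_
      obtain ⟨η, hη, hξη⟩ := (lt_mul_iff_of_isSuccLimit hμ).1 hξ
      have hγη : γ * η < ω₁ := mul_lt_omega1 hγ (hη.trans hα)
      exact ⟨η, hη,
        (monotoneBelow_iter hf hx hξη.le hγη).trans (ih η hη (hη.trans hα)).2⟩

end IterOrd
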